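/- Let A_1 be an m_1×n NASM and A_2 an m_2×n NASM, and assume that every column of A_1 and every column of A_2 contains at least one nonzero entry. Then the vertical concatenation [A_1; A_2] (the (m_1+m_2)×n matrix whose first m_1 rows are A_1 and last m_2 rows are A_2) is a NASM if and only if A_1^↓ = -A_2^↑. In that case, [A_1; A_2] is a NASM(m_1+m_2, n; (w_r(A_1),w_r(A_2)), w_c(A_1)+w_c(A_2)), i.e., its row-weight sequence is the concatenation of those of A_1 and A_2 and its column-weight sequence is their entrywise sum. -/

import Mathlib

def rowWeight {α : Type*} [Zero α] [DecidableEq α] {m n : ℕ}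
    (A : Matrix (Fin m) (Fin n) α) (i : Fin m) : ℕ :=
  (Finset.univ.filter (fun j => A i j ≠ 0)).card

def colWeight {α : Type*} [Zero α] [DecidableEq α] {m n : ℕ}
    (A : Matrix (Fin m) (Fin n) α) (j : Fin n) : ℕ :=
  (Finset.univ.filter (fun i => A i j ≠ 0)).card

/-- The nonzero entries of the sequence `r` alternate in sign. -/
def AltSigns {n : ℕ} (r : Fin n → ℤ) : Prop :=
  ∀ j j' : Fin n, j < j' → r j ≠ 0 → r j' ≠ 0 →
    (∀ l : Fin n, j < l → l < j' → r l = 0) → r j' = -(r j)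

/-- A near alternating sign matrix: entries in `{0, 1, -1}`, and in every row and
every column the nonzero entries alternate in sign. -/
def IsNASM {m n : ℕ} (A : Matrix (Fin m) (Fin n) ℤ) : Prop :=
  (∀ i j, A i j = 0 ∨ A i j = 1 ∨ A i j = -1) ∧
  (∀ i : Fin m, AltSigns (fun j => A i j)) ∧
  (∀ j : Fin n, AltSigns (fun i => A i j))

/-- The first nonzero entry of row `i` of `A` (or `0` if row `i` is zero). -/
def firstNZRow {m n : ℕ} (A : Matrix (Fin m) (Fin n) ℤ) (i : Fin m) : ℤ :=
  if h : (Finset.univ.filter (fun j => A i j ≠ 0)).Nonempty then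
    A i ((Finset.univ.filter (fun j => A i j ≠ 0)).min' h)
  else 0

/-- The last nonzero entry of row `i` of `A` (or `0` if row `i` is zero). -/
def lastNZRow {m n : ℕ} (A : Matrix (Fin m) (Fin n) ℤ) (i : Fin m) : ℤ :=
  if h : (Finset.univ.filter (fun j => A i j ≠ 0)).Nonempty then
    A i ((Finset.univ.filter (fun j => A i j ≠ 0)).max' h)
  else 0

/-- The first (topmost) nonzero entry of column `j` of `A` (or `0` if column `j` is zero). -/
def firstNZCol {m n : ℕ} (A : Matrix (Fin m) (Fin n) ℤ) (j : Fin n) : ℤ :=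
  if h : (Finset.univ.filter (fun i => A i j ≠ 0)).Nonempty then
    A ((Finset.univ.filter (fun i => A i j ≠ 0)).min' h) j
  else 0

/-- The last (bottommost) nonzero entry of column `j` of `A` (or `0` if column `j` is zero). -/
def lastNZCol {m n : ℕ} (A : Matrix (Fin m) (Fin n) ℤ) (j : Fin n) : ℤ :=
  if h : (Finset.univ.filter (fun i => A i j ≠ 0)).Nonempty then
    A ((Finset.univ.filter (fun i => A i j ≠ 0)).max' h) j
  else 0

/-!
Rows of `[A1; A2]` are rows of `A1` or of `A2`, so only the columns can fail to alternate.
Reading a column of `[A1; A2]` from the top, its nonzero entries are those of the column of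
`A1` followed by those of the column of `A2`. Alternation within each block is inherited, so
the only new pair of consecutive nonzero entries is the bottommost one of `A1` followed by the
topmost one of `A2`, and this pair alternates exactly when `A1^↓ = -A2^↑`. The weights just count
nonzero entries, which split over the two blocks.
-/

namespace Fin

lemma castAdd_lt_natAdd {m n : ℕ} (i : Fin m) (j : Fin n) : castAdd n i < natAdd m j := by
  simp only [lt_def, val_castAdd, val_natAdd]
  omega

end Fin

namespace AltSigns

variable {m1 m2 : ℕ} {c1 : Fin m1 → ℤ} {c2 : Fin m2 → ℤ} {M : Fin m1} {N : Fin m2}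

lemma append_junction (h : AltSigns (Fin.append c1 c2)) (hM : c1 M ≠ 0)
    (hM_last : ∀ i, M < i → c1 i = 0) (hN : c2 N ≠ 0) (hN_first : ∀ i, i < N → c2 i = 0) :
    c2 N = -c1 M := by
  have := h (Fin.castAdd m2 M) (Fin.natAdd m1 N) (Fin.castAdd_lt_natAdd M N)
    (by simpa using hM) (by simpa using hN) fun l hMl hlN => by
      cases l using Fin.addCases with
      | left l => simpa using hM_last l ((Fin.strictMono_castAdd m2).lt_iff_lt.mp hMl)
      | right l => simpa using hN_first l ((Fin.natAdd_lt_natAdd_iff m1).mp hlN)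
  simpa using this

lemma append (h1 : AltSigns c1) (h2 : AltSigns c2) (hM : c1 M ≠ 0)
    (hM_last : ∀ i, M < i → c1 i = 0) (hN : c2 N ≠ 0) (hN_first : ∀ i, i < N → c2 i = 0)
    (hMN : c2 N = -c1 M) : AltSigns (Fin.append c1 c2) := by
  have castAdd_lt_iff {a b : Fin m1} : Fin.castAdd m2 a < Fin.castAdd m2 b ↔ a < b :=
    (Fin.strictMono_castAdd m2).lt_iff_lt
  have natAdd_lt_iff {a b : Fin m2} : Fin.natAdd m1 a < Fin.natAdd m1 b ↔ a < b :=
    Fin.natAdd_lt_natAdd_iff m1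
  intro j j' hjj' hj hj' hgap
  cases j using Fin.addCases with
  | left j =>
    cases j' using Fin.addCases with
    | left j' =>
      simp only [Fin.append_left] at hj hj' ⊢
      refine h1 j j' (castAdd_lt_iff.mp hjj') hj hj' fun l hjl hlj' => ?_
      simpa using hgap _ (castAdd_lt_iff.mpr hjl) (castAdd_lt_iff.mpr hlj')
    | right j' =>
      simp only [Fin.append_left, Fin.append_right] at hj hj' ⊢
      have hjM : j = M := by
        refine le_antisymm (not_lt.mp fun h => hj (hM_last j h)) (not_lt.mp fun h => hM ?_)
        simpa using hgap _ (castAdd_lt_iff.mpr h) (Fin.castAdd_lt_natAdd M j')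
      have hj'N : j' = N := by
        refine le_antisymm (not_lt.mp fun h => hN ?_) (not_lt.mp fun h => hj' (hN_first j' h))
        simpa using hgap _ (Fin.castAdd_lt_natAdd j N) (natAdd_lt_iff.mpr h)
      rw [hjM, hj'N, hMN]
  | right j =>
    cases j' using Fin.addCases with
    | left j' => exact absurd hjj' (Fin.castAdd_lt_natAdd j' j).not_gt
    | right j' =>
      simp only [Fin.append_right] at hj hj' ⊢
      refine h2 j j' (natAdd_lt_iff.mp hjj') hj hj' fun l hjl hlj' => ?_
      simpa using hgap _ (natAdd_lt_iff.mpr hjl) (natAdd_lt_iff.mpr hlj')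

lemma append_iff (h1 : AltSigns c1) (h2 : AltSigns c2) (hM : c1 M ≠ 0)
    (hM_last : ∀ i, M < i → c1 i = 0) (hN : c2 N ≠ 0) (hN_first : ∀ i, i < N → c2 i = 0) :
    AltSigns (Fin.append c1 c2) ↔ c2 N = -c1 M :=
  ⟨fun h => h.append_junction hM hM_last hN hN_first, h1.append h2 hM hM_last hN hN_first⟩

end AltSigns

def vconcat {α : Type*} {m1 m2 n : ℕ} (A1 : Matrix (Fin m1) (Fin n) α)
    (A2 : Matrix (Fin m2) (Fin n) α) : Matrix (Fin (m1 + m2)) (Fin n) α :=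
  Matrix.of fun i j => Fin.append (fun i1 => A1 i1 j) (fun i2 => A2 i2 j) i

section vconcat

variable {α : Type*} {m1 m2 n : ℕ} (A1 : Matrix (Fin m1) (Fin n) α)
  (A2 : Matrix (Fin m2) (Fin n) α)

@[simp]
lemma vconcat_castAdd (i : Fin m1) (j : Fin n) : vconcat A1 A2 (Fin.castAdd m2 i) j = A1 i j := by
  simp [vconcat]

@[simp]
lemma vconcat_natAdd (i : Fin m2) (j : Fin n) : vconcat A1 A2 (Fin.natAdd m1 i) j = A2 i j := by
  simp [vconcat]

variable [Zero α] [DecidableEq α]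

lemma rowWeight_vconcat (i : Fin (m1 + m2)) :
    rowWeight (vconcat A1 A2) i = Fin.append (rowWeight A1) (rowWeight A2) i := by
  cases i using Fin.addCases <;> simp [rowWeight]

lemma colWeight_vconcat (j : Fin n) :
    colWeight (vconcat A1 A2) j = colWeight A1 j + colWeight A2 j := by
  simp only [colWeight, Finset.card_filter, Fin.sum_univ_add, vconcat_castAdd, vconcat_natAdd]

end vconcat

section NASM

variable {m m1 m2 n : ℕ}

lemma exists_lastNZCol_eq {A : Matrix (Fin m) (Fin n) ℤ} {j : Fin n} (h : ∃ i, A i j ≠ 0) :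
    ∃ M, A M j ≠ 0 ∧ (∀ i, M < i → A i j = 0) ∧ lastNZCol A j = A M j := by
  have hne : (Finset.univ.filter fun i => A i j ≠ 0).Nonempty :=
    let ⟨i, hi⟩ := h; ⟨i, by simpa using hi⟩
  refine ⟨_, by simpa using Finset.max'_mem _ hne, fun i hi => ?_, dif_pos hne⟩
  by_contra hi'
  exact (Finset.le_max' _ i (by simpa using hi')).not_gt hi

lemma exists_firstNZCol_eq {A : Matrix (Fin m) (Fin n) ℤ} {j : Fin n} (h : ∃ i, A i j ≠ 0) :
    ∃ N, A N j ≠ 0 ∧ (∀ i, i < N → A i j = 0) ∧ firstNZCol A j = A N j := by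
  have hne : (Finset.univ.filter fun i => A i j ≠ 0).Nonempty :=
    let ⟨i, hi⟩ := h; ⟨i, by simpa using hi⟩
  refine ⟨_, by simpa using Finset.min'_mem _ hne, fun i hi => ?_, dif_pos hne⟩
  by_contra hi'
  exact (Finset.min'_le _ i (by simpa using hi')).not_gt hi

variable {A1 : Matrix (Fin m1) (Fin n) ℤ} {A2 : Matrix (Fin m2) (Fin n) ℤ}

lemma altSigns_col_vconcat_iff (h1 : IsNASM A1) (h2 : IsNASM A2) {j : Fin n}
    (hc1 : ∃ i, A1 i j ≠ 0) (hc2 : ∃ i, A2 i j ≠ 0) :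
    AltSigns (fun i => vconcat A1 A2 i j) ↔ lastNZCol A1 j = -firstNZCol A2 j := by
  obtain ⟨M, hM, hM_last, hlast⟩ := exists_lastNZCol_eq hc1
  obtain ⟨N, hN, hN_first, hfirst⟩ := exists_firstNZCol_eq hc2
  refine (AltSigns.append_iff (h1.2.2 j) (h2.2.2 j) hM hM_last hN hN_first).trans ?_
  rw [hlast, hfirst, Int.eq_neg_comm]

lemma isNASM_vconcat_iff (h1 : IsNASM A1) (h2 : IsNASM A2)
    (hc1 : ∀ j, ∃ i, A1 i j ≠ 0) (hc2 : ∀ j, ∃ i, A2 i j ≠ 0) :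
    IsNASM (vconcat A1 A2) ↔ ∀ j, lastNZCol A1 j = -firstNZCol A2 j := by
  have entries (i : Fin (m1 + m2)) (j : Fin n) :
      vconcat A1 A2 i j = 0 ∨ vconcat A1 A2 i j = 1 ∨ vconcat A1 A2 i j = -1 := by
    cases i using Fin.addCases <;> simp [h1.1, h2.1]
  have rows (i : Fin (m1 + m2)) : AltSigns (fun j => vconcat A1 A2 i j) := by
    cases i using Fin.addCases <;> simp [h1.2.1, h2.2.1]
  have cols (j : Fin n) := altSigns_col_vconcat_iff h1 h2 (hc1 j) (hc2 j)
  exact ⟨fun h j => (cols j).mp (h.2.2 j), fun h => ⟨entries, rows, fun j => (cols j).mpr (h j)⟩⟩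

end NASM

/-- Let `A1` be an `m1 × n` NASM and `A2` an `m2 × n` NASM, each of
whose columns contains a nonzero entry. The vertical concatenation `B = [A1; A2]` is a
NASM iff `A1^↓ = -A2^↑`, and in that case its row-weight sequence is the concatenation
of those of `A1`, `A2` and its column-weight sequence is their entrywise sum. -/
theorem statement4 (m1 m2 n : ℕ)
    (A1 : Matrix (Fin m1) (Fin n) ℤ) (A2 : Matrix (Fin m2) (Fin n) ℤ)
    (h1 : IsNASM A1) (h2 : IsNASM A2)
    (hc1 : ∀ j, ∃ i, A1 i j ≠ 0) (hc2 : ∀ j, ∃ i, A2 i j ≠ 0)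
    (B : Matrix (Fin (m1 + m2)) (Fin n) ℤ)
    (hB : ∀ i j, B i j = Fin.append (fun i1 => A1 i1 j) (fun i2 => A2 i2 j) i) :
    (IsNASM B ↔ ∀ j, lastNZCol A1 j = -(firstNZCol A2 j)) ∧
    ((∀ j, lastNZCol A1 j = -(firstNZCol A2 j)) →
      (∀ i : Fin (m1 + m2),
        rowWeight B i = Fin.append (fun i1 => rowWeight A1 i1) (fun i2 => rowWeight A2 i2) i) ∧
      (∀ j, colWeight B j = colWeight A1 j + colWeight A2 j)) := by
  obtain rfl : B = vconcat A1 A2 := Matrix.ext hB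
  exact ⟨isNASM_vconcat_iff h1 h2 hc1 hc2,
    fun _ => ⟨rowWeight_vconcat A1 A2, colWeight_vconcat A1 A2⟩⟩
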